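/- arXiv:1712.05864 — 5 statements merged into one kernel-verified Lean document; each statement's English description precedes it below -/
import Mathlib

section
/- ADI error equation: Let A ∈ ℂ^{m×m}, B ∈ ℂ^{n×n}, F ∈ ℂ^{m×n}, and suppose X satisfies AX − XB = F. Let shift parameters (α_1, β_1), …, (α_k, β_k) ∈ ℂ² be such that no β_j is an eigenvalue of A and no α_j is an eigenvalue of B. Define the ADI iterates by X^{(0)} = 0 and, for j ≥ 0, (A − β_{j+1}I)X^{(j+1/2)} = X^{(j)}(B − β_{j+1}I) + F and X^{(j+1)}(B − α_{j+1}I) = (A − α_{j+1}I)X^{(j+1/2)} − F. Then X − X^{(k)} = r_k(A) · X · r_k(B)^{−1}, where r_k(z) = Π_{j=1}^{k} (z − α_j)/(z − β_j), r_k(A) = Π_{j=1}^{k}(A − α_jI)(A − β_jI)^{−1}, and r_k(B)^{−1} = Π_{j=1}^{k}(B − β_jI)(B − α_jI)^{−1}. -/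
/-! Both half-steps of an ADI sweep are solved by `X` itself, since `AX − XB = F` can be
rewritten as `(A − cI)X = X(B − cI) + F` for every shift `c`. Subtracting, the error
`E = X − X⁽ʲ⁾` passes through the sweep as `E ↦ (A − αI)(A − βI)⁻¹ E (B − βI)(B − αI)⁻¹`.
The left factors are all rational functions of `A`, hence commute with each other, so `k`
sweeps unroll to `r_k(A) E₀ r_k(B)⁻¹` with `E₀ = X`. -/

/-- The ordered product `f 0 * f 1 * ⋯ * f (k-1)` of square matrices. -/
noncomputable def matProd {m : ℕ} (f : ℕ → Matrix (Fin m) (Fin m) ℂ) :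
    ℕ → Matrix (Fin m) (Fin m) ℂ
  | 0 => 1
  | k + 1 => matProd f k * f k

theorem Commute.ringInverse_right {M₀ : Type*} [MonoidWithZero M₀] {a b : M₀}
    (h : Commute a b) : Commute a (Ring.inverse b) := by
  by_cases hb : IsUnit b
  · lift b to M₀ˣ using hb
    simpa using h.units_inv_right
  · simp [Ring.inverse_non_unit _ hb]

namespace Matrix

variable {R : Type*} [CommRing R] {m n : Type*} [Fintype m] [DecidableEq m]
  [Fintype n] [DecidableEq n]

theorem isUnit_sub_smul_one_of_notMem_spectrum {A : Matrix m m R} {c : R}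
    (hc : c ∉ spectrum R A) : IsUnit (A - c • 1) := by
  rwa [spectrum.notMem_iff, Algebra.algebraMap_eq_smul_one, IsUnit.sub_iff] at hc

theorem commute_sub_smul_one (A : Matrix m m R) (a b : R) :
    Commute (A - a • 1) (A - b • 1) :=
  ((Commute.refl A).sub_right ((Commute.one_right A).smul_right b)).sub_left
    ((Commute.one_left _).smul_left a)

theorem commute_sub_smul_one_mul_inv (A : Matrix m m R) (a b c d : R) :
    Commute ((A - a • 1) * (A - b • 1)⁻¹) ((A - c • 1) * (A - d • 1)⁻¹) := by
  simp only [nonsing_inv_eq_ringInverse]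
  have shift_inv (x y : R) : Commute (A - x • 1) (Ring.inverse (A - y • 1)) :=
    (commute_sub_smul_one A x y).ringInverse_right
  refine ((commute_sub_smul_one A a c).mul_right (shift_inv a d)).mul_left ?_
  exact (shift_inv c b).symm.mul_right (commute_sub_smul_one A b d).ringInverse_ringInverse

theorem sub_smul_one_mul_of_sub_eq {A : Matrix m m R} {B : Matrix n n R} {X F : Matrix m n R}
    (hX : A * X - X * B = F) (c : R) : (A - c • 1) * X = X * (B - c • 1) + F := by
  rw [← hX, Matrix.sub_mul, Matrix.mul_sub, Matrix.smul_mul, Matrix.mul_smul, Matrix.one_mul,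
    Matrix.mul_one]
  abel

theorem adi_error_step {A : Matrix m m R} {B : Matrix n n R} {F X Y Yhalf Y' : Matrix m n R}
    {a b : R} (hX : A * X - X * B = F) (hb : IsUnit (A - b • 1)) (ha : IsUnit (B - a • 1))
    (h1 : (A - b • 1) * Yhalf = Y * (B - b • 1) + F)
    (h2 : Y' * (B - a • 1) = (A - a • 1) * Yhalf - F) :
    X - Y' = (A - a • 1) * (A - b • 1)⁻¹ * (X - Y) * ((B - b • 1) * (B - a • 1)⁻¹) := by
  have half : (A - b • 1) * (X - Yhalf) = (X - Y) * (B - b • 1) := by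
    rw [Matrix.mul_sub, sub_smul_one_mul_of_sub_eq hX, h1, Matrix.sub_mul]
    abel
  have full : (X - Y') * (B - a • 1) = (A - a • 1) * (X - Yhalf) := by
    rw [Matrix.sub_mul, h2, eq_sub_of_add_eq (sub_smul_one_mul_of_sub_eq hX a).symm,
      Matrix.mul_sub]
    abel
  rw [isUnit_iff_isUnit_det] at ha hb
  rw [← mul_nonsing_inv_cancel_right _ (X - Y') ha, full,
    ← nonsing_inv_mul_cancel_left _ (X - Yhalf) hb, half]
  simp only [Matrix.mul_assoc]

end Matrix

theorem commute_matProd {m : ℕ} {f : ℕ → Matrix (Fin m) (Fin m) ℂ} {M : Matrix (Fin m) (Fin m) ℂ}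
    (h : ∀ j, Commute M (f j)) : ∀ k, Commute M (matProd f k)
  | 0 => Commute.one_right M
  | k + 1 => (commute_matProd h k).mul_right (h k)

theorem eq_matProd_mul_mul_matProd {m n : ℕ} {f : ℕ → Matrix (Fin m) (Fin m) ℂ}
    {g : ℕ → Matrix (Fin n) (Fin n) ℂ} {E : ℕ → Matrix (Fin m) (Fin n) ℂ}
    (hf : ∀ i j, Commute (f i) (f j)) :
    ∀ k, (∀ j < k, E (j + 1) = f j * E j * g j) → E k = matProd f k * E 0 * matProd g k
  | 0, _ => by simp [matProd]
  | k + 1, hE => by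
    rw [hE k k.lt_succ_self,
      eq_matProd_mul_mul_matProd hf k fun j hj => hE j (hj.trans k.lt_succ_self),
      matProd, matProd, ← Matrix.mul_assoc, ← Matrix.mul_assoc,
      ← (commute_matProd (hf k) k).eq]
    simp only [Matrix.mul_assoc]

/-- **ADI error equation.**  If `X` solves `AX - XB = F` and `X⁽ᵏ⁾` is the `k`-th ADI
iterate with shift parameters `(αⱼ, βⱼ)` (no `βⱼ` an eigenvalue of `A`, no `αⱼ` an
eigenvalue of `B`), starting from `X⁽⁰⁾ = 0`, then
`X - X⁽ᵏ⁾ = r_k(A) · X · r_k(B)⁻¹` where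
`r_k(A) = ∏ⱼ (A - αⱼI)(A - βⱼI)⁻¹` and `r_k(B)⁻¹ = ∏ⱼ (B - βⱼI)(B - αⱼI)⁻¹`. -/
theorem adi_error_equation {m n : ℕ}
    (A : Matrix (Fin m) (Fin m) ℂ) (B : Matrix (Fin n) (Fin n) ℂ)
    (F X : Matrix (Fin m) (Fin n) ℂ) (hX : A * X - X * B = F)
    (k : ℕ) (α β : ℕ → ℂ)
    (hβ : ∀ j < k, β j ∉ spectrum ℂ A)
    (hα : ∀ j < k, α j ∉ spectrum ℂ B)
    (Xfull Xhalf : ℕ → Matrix (Fin m) (Fin n) ℂ)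
    (h0 : Xfull 0 = 0)
    (hstep1 : ∀ j < k, (A - β j • 1) * Xhalf j = Xfull j * (B - β j • 1) + F)
    (hstep2 : ∀ j < k, Xfull (j + 1) * (B - α j • 1) = (A - α j • 1) * Xhalf j - F) :
    X - Xfull k =
      matProd (fun j => (A - α j • 1) * (A - β j • 1)⁻¹) k * X *
        matProd (fun j => (B - β j • 1) * (B - α j • 1)⁻¹) k := by
  have error_step : ∀ j < k, X - Xfull (j + 1) =
      (A - α j • 1) * (A - β j • 1)⁻¹ * (X - Xfull j) * ((B - β j • 1) * (B - α j • 1)⁻¹) :=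
    fun j hj => Matrix.adi_error_step hX (Matrix.isUnit_sub_smul_one_of_notMem_spectrum (hβ j hj))
      (Matrix.isUnit_sub_smul_one_of_notMem_spectrum (hα j hj)) (hstep1 j hj) (hstep2 j hj)
  have unrolled := eq_matProd_mul_mul_matProd (E := fun j => X - Xfull j)
    (g := fun j => (B - β j • 1) * (B - α j • 1)⁻¹)
    (fun i j => Matrix.commute_sub_smul_one_mul_inv A (α i) (β i) (α j) (β j)) k error_step
  rwa [h0, sub_zero] at unrolled
end

section
/- ADI-based singular value bound for normal matrices: Let A ∈ ℂ^{m×m} and B ∈ ℂ^{n×n} (m ≥ n) be normal matrices with disjoint spectra, let F ∈ ℂ^{m×n} have rank ρ, and let X be the unique solution of AX − XB = F. Let (α_1, β_1), …, (α_k, β_k) ∈ ℂ² be such that no β_j is an eigenvalue of A and no α_j is an eigenvalue of B, and set r_k(z) = Π_{j=1}^{k} (z − α_j)/(z − β_j). Then, whenever 0 ≤ kρ < n, σ_{kρ+1}(X) ≤ ( sup_{z ∈ λ(A)} |r_k(z)| ) · ( sup_{w ∈ λ(B)} 1/|r_k(w)| ) · ‖X‖₂, where λ(A) and λ(B) denote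 the spectra of A and B. -/
/-!
Put `R = r_k(A)` and `S = r_k(B)⁻¹`, defined by the continuous functional calculus. One ADI
factor `C = (A - α)(A - β)⁻¹`, `D = (B - β)(B - α)⁻¹` satisfies
`(A - β)(X - C X D)(B - α) = (β - α) F`, so it perturbs `X` by a matrix of rank at most `ρ`;
telescoping over the `k` factors, `X - R X S` has rank at most `kρ`. By the Eckart–Young
characterization, `σ_{kρ+1}(X) ≤ ‖R X S‖ ≤ ‖R‖ ‖X‖ ‖S‖`, and for normal matrices the norm of
`f(A)` is at most the supremum of `|f|` over the spectrum.
-/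

/-- The spectral norm of a complex matrix. -/
noncomputable def specNorm {m n : ℕ} (M : Matrix (Fin m) (Fin n) ℂ) : ℝ :=
  ‖LinearMap.toContinuousLinearMap (Matrix.toEuclideanLin M)‖

/-- The `j`-th largest singular value of a complex matrix (for `j ≥ 1`), via the
Eckart–Young characterization `σ_j(M) = min {‖M - N‖₂ : rank N < j}`. -/
noncomputable def singularValue {m n : ℕ} (M : Matrix (Fin m) (Fin n) ℂ) (j : ℕ) : ℝ :=
  sInf ((fun N : Matrix (Fin m) (Fin n) ℂ => specNorm (M - N)) '' {N | N.rank < j})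

open Finset
open scoped Matrix.Norms.L2Operator

namespace Matrix

variable {K : Type*} [Field K] {m n : Type*} [Fintype n]

theorem rank_add_le (M N : Matrix m n K) : (M + N).rank ≤ M.rank + N.rank := by
  rw [rank, rank, rank, mulVecLin_add]
  refine (Submodule.finrank_mono ?_).trans (Submodule.finrank_add_le_finrank_add_finrank _ _)
  rintro _ ⟨v, rfl⟩
  exact Submodule.add_mem_sup (LinearMap.mem_range_self _ v) (LinearMap.mem_range_self _ v)

theorem rank_smul_le (c : K) (M : Matrix m n K) : (c • M).rank ≤ M.rank := by
  rcases eq_or_ne c 0 with rfl | hc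
  · simp
  · exact (rank_smul_of_mem_nonZeroDivisors M (mem_nonZeroDivisors_of_ne_zero hc)).le

theorem rank_sub_mul_mul_le_of_mul_sub_mul_eq [Fintype m] [DecidableEq m] [DecidableEq n]
    {A : Matrix m m K} {B : Matrix n n K} {X F : Matrix m n K} (hX : A * X - X * B = F)
    {a b : K} {C : Matrix m m K} {D : Matrix n n K}
    (hA : IsUnit (A - b • 1)) (hB : IsUnit (B - a • 1))
    (hC : (A - b • 1) * C = A - a • 1) (hD : D * (B - a • 1) = B - b • 1) :
    (X - C * X * D).rank ≤ F.rank := by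
  have key : (A - b • 1) * (X - C * X * D) * (B - a • 1) = (b - a) • F := by
    calc (A - b • 1) * (X - C * X * D) * (B - a • 1)
        = (A - b • 1) * X * (B - a • 1) - ((A - b • 1) * C) * X * (D * (B - a • 1)) := by
          simp only [Matrix.mul_sub, Matrix.sub_mul, Matrix.mul_assoc]
          abel
      _ = (b - a) • (A * X - X * B) := by
          rw [hC, hD]
          simp only [Matrix.sub_mul, Matrix.mul_sub, Matrix.smul_mul, Matrix.mul_smul,
            Matrix.one_mul, Matrix.mul_one, Matrix.mul_assoc, smul_sub, sub_smul]
          module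
      _ = (b - a) • F := by rw [hX]
  calc (X - C * X * D).rank = ((A - b • 1) * (X - C * X * D) * (B - a • 1)).rank := by
        rw [rank_mul_eq_left_of_isUnit_det _ _ ((isUnit_iff_isUnit_det _).mp hB),
          rank_mul_eq_right_of_isUnit_det _ _ ((isUnit_iff_isUnit_det _).mp hA)]
    _ ≤ F.rank := key ▸ rank_smul_le _ _

end Matrix

theorem isUnit_sub_smul_one_of_notMem_spectrum {R A : Type*} [CommSemiring R] [Ring A]
    [Algebra R A] {a : A} {b : R} (hb : b ∉ spectrum R a) : IsUnit (a - b • 1) := by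
  simpa [Algebra.algebraMap_eq_smul_one] using (spectrum.notMem_iff.mp hb).neg

section CStarAlgebra

variable {A : Type*} [CStarAlgebra A] (a : A) [IsStarNormal a]

theorem cfc_id_sub_const (c : ℂ) : cfc (fun z => z - c) a = a - c • 1 := by
  rw [cfc_sub (fun z => z) (fun _ => c) a, cfc_id' ℂ a, cfc_const c a,
    Algebra.algebraMap_eq_smul_one]

variable {a}

theorem sub_smul_one_mul_cfc_div {b : ℂ} (hb : b ∉ spectrum ℂ a) (c : ℂ) :
    (a - b • 1) * cfc (fun z => (z - c) / (z - b)) a = a - c • 1 := by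
  have hne : ∀ z ∈ spectrum ℂ a, z - b ≠ 0 := fun z hz =>
    sub_ne_zero.mpr (ne_of_mem_of_not_mem hz hb)
  have hcont : ContinuousOn (fun z => (z - c) / (z - b)) (spectrum ℂ a) :=
    ContinuousOn.div (by fun_prop) (by fun_prop) hne
  rw [← cfc_id_sub_const a b, ← cfc_mul _ _ a (by fun_prop) hcont, ← cfc_id_sub_const a c]
  exact cfc_congr fun z hz => mul_div_cancel₀ _ (hne z hz)

theorem cfc_div_mul_sub_smul_one {b : ℂ} (hb : b ∉ spectrum ℂ a) (c : ℂ) :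
    cfc (fun z => (z - c) / (z - b)) a * (a - b • 1) = a - c • 1 := by
  rw [← cfc_id_sub_const a b, ← (cfc_commute_cfc _ _ a).eq, cfc_id_sub_const,
    sub_smul_one_mul_cfc_div hb]

end CStarAlgebra

theorem Matrix.norm_cfc_le_iSup_spectrum {n : Type*} [Fintype n] [DecidableEq n]
    (M : Matrix n n ℂ) [IsStarNormal M] (f : ℂ → ℂ) :
    ‖cfc f M‖ ≤ ⨆ z ∈ spectrum ℂ M, ‖f z‖ := by
  have hsub : (⋃ z, Set.range fun _ : z ∈ spectrum ℂ M => ‖f z‖) ⊆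
      (fun z => ‖f z‖) '' spectrum ℂ M :=
    Set.iUnion_subset fun z => Set.range_subset_iff.mpr fun hz => ⟨z, hz, rfl⟩
  exact norm_cfc_le (Real.iSup_nonneg fun _ => Real.iSup_nonneg fun _ => norm_nonneg _)
    fun z hz => le_ciSup₂ (f := fun z (_ : z ∈ spectrum ℂ M) => ‖f z‖)
      ((M.finite_spectrum.image _).bddAbove.mono hsub) z hz

noncomputable def adiRational (α β : ℕ → ℂ) (k : ℕ) (z : ℂ) : ℂ :=
  ∏ j ∈ range k, (z - α j) / (z - β j)

theorem adiRational_zero (α β : ℕ → ℂ) : adiRational α β 0 = fun _ => 1 :=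
  funext fun _ => prod_range_zero _

theorem adiRational_succ (α β : ℕ → ℂ) (k : ℕ) :
    adiRational α β (k + 1) = fun z => adiRational α β k z * ((z - α k) / (z - β k)) :=
  funext fun _ => prod_range_succ _ _

theorem adiRational_swap (α β : ℕ → ℂ) (k : ℕ) (z : ℂ) :
    adiRational β α k z = (adiRational α β k z)⁻¹ := by
  simp only [adiRational, ← prod_inv_distrib, inv_div]

theorem Matrix.rank_sub_cfc_adiRational_mul_mul_le {m n : Type*} [Fintype m] [DecidableEq m]
    [Fintype n] [DecidableEq n] {A : Matrix m m ℂ} {B : Matrix n n ℂ} [IsStarNormal A]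
    [IsStarNormal B] {X F : Matrix m n ℂ} (hX : A * X - X * B = F) {α β : ℕ → ℂ} {k : ℕ}
    (hβ : ∀ j < k, β j ∉ spectrum ℂ A) (hα : ∀ j < k, α j ∉ spectrum ℂ B) :
    (X - cfc (adiRational α β k) A * X * cfc (adiRational β α k) B).rank ≤ k * F.rank := by
  induction k with
  | zero => simp [adiRational_zero, cfc_const_one]
  | succ t ih =>
    set R := cfc (adiRational α β t) A
    set S := cfc (adiRational β α t) B
    set C := cfc (fun z => (z - α t) / (z - β t)) A
    set D := cfc (fun z => (z - β t) / (z - α t)) B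
    have hR : cfc (adiRational α β (t + 1)) A = R * C := by
      rw [adiRational_succ]
      exact cfc_mul _ _ A (A.finite_spectrum.continuousOn _) (A.finite_spectrum.continuousOn _)
    have hS : cfc (adiRational β α (t + 1)) B = D * S := by
      rw [adiRational_succ]
      simp only [mul_comm (adiRational β α t _)]
      exact cfc_mul _ _ B (B.finite_spectrum.continuousOn _) (B.finite_spectrum.continuousOn _)
    have hβt := hβ t t.lt_succ_self
    have hαt := hα t t.lt_succ_self
    have hstep : (X - C * X * D).rank ≤ F.rank :=
      rank_sub_mul_mul_le_of_mul_sub_mul_eq hX (isUnit_sub_smul_one_of_notMem_spectrum hβt)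
        (isUnit_sub_smul_one_of_notMem_spectrum hαt) (sub_smul_one_mul_cfc_div hβt _)
        (cfc_div_mul_sub_smul_one hαt _)
    calc (X - cfc (adiRational α β (t + 1)) A * X * cfc (adiRational β α (t + 1)) B).rank
        = ((X - R * X * S) + R * (X - C * X * D) * S).rank := by
          rw [hR, hS]
          simp only [Matrix.mul_sub, Matrix.sub_mul, Matrix.mul_assoc]
          abel_nf
      _ ≤ (X - R * X * S).rank + (R * (X - C * X * D) * S).rank := Matrix.rank_add_le _ _
      _ ≤ t * F.rank + F.rank :=
          add_le_add (ih (fun j hj => hβ j (hj.trans t.lt_succ_self))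
            (fun j hj => hα j (hj.trans t.lt_succ_self)))
            (((Matrix.rank_mul_le_left _ _).trans (Matrix.rank_mul_le_right _ _)).trans hstep)
      _ = (t + 1) * F.rank := by ring

theorem singularValue_le_specNorm_sub {m n : ℕ} {M N : Matrix (Fin m) (Fin n) ℂ} {j : ℕ}
    (hN : N.rank < j) : singularValue M j ≤ specNorm (M - N) :=
  csInf_le ⟨0, by rintro _ ⟨N', -, rfl⟩; exact norm_nonneg _⟩ ⟨N, hN, rfl⟩

theorem adi_singular_value_bound_general {m n : ℕ} (k ρ : ℕ)
    (A : Matrix (Fin m) (Fin m) ℂ) (B : Matrix (Fin n) (Fin n) ℂ)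
    (hA : A * A.conjTranspose = A.conjTranspose * A)
    (hB : B * B.conjTranspose = B.conjTranspose * B)
    (F X : Matrix (Fin m) (Fin n) ℂ)
    (hrank : F.rank = ρ)
    (hX : A * X - X * B = F)
    (α β : ℕ → ℂ)
    (hβ : ∀ j < k, β j ∉ spectrum ℂ A)
    (hα : ∀ j < k, α j ∉ spectrum ℂ B) :
    singularValue X (k * ρ + 1) ≤
      (⨆ z ∈ spectrum ℂ A,
          ‖∏ j ∈ Finset.range k, (z - α j) / (z - β j)‖) *
        (⨆ w ∈ spectrum ℂ B,
          ‖∏ j ∈ Finset.range k, (w - α j) / (w - β j)‖⁻¹) *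
        specNorm X := by
  have : IsStarNormal A := ⟨hA.symm⟩
  have : IsStarNormal B := ⟨hB.symm⟩
  set R := cfc (adiRational α β k) A
  set S := cfc (adiRational β α k) B
  have hlow : (X - R * X * S).rank < k * ρ + 1 :=
    Nat.lt_succ_of_le (hrank ▸ Matrix.rank_sub_cfc_adiRational_mul_mul_le hX hβ hα)
  have hsupA : 0 ≤ ⨆ z ∈ spectrum ℂ A, ‖adiRational α β k z‖ :=
    Real.iSup_nonneg fun _ => Real.iSup_nonneg fun _ => norm_nonneg _
  calc singularValue X (k * ρ + 1) ≤ ‖R * X * S‖ :=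
        (singularValue_le_specNorm_sub hlow).trans_eq (by rw [sub_sub_cancel]; rfl)
    _ ≤ ‖R‖ * ‖X‖ * ‖S‖ :=
        (Matrix.l2_opNorm_mul _ _).trans (by gcongr; exact Matrix.l2_opNorm_mul _ _)
    _ ≤ (⨆ z ∈ spectrum ℂ A, ‖adiRational α β k z‖) * ‖X‖ *
          (⨆ w ∈ spectrum ℂ B, ‖adiRational β α k w‖) := by
        gcongr
        · exact Matrix.norm_cfc_le_iSup_spectrum A _
        · exact Matrix.norm_cfc_le_iSup_spectrum B _
    _ = _ := by
        simp only [adiRational_swap α β k, norm_inv]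
        rw [mul_right_comm]
        rfl

/-- **ADI-based singular value bound for normal matrices.**  If `A` and `B` are normal
with disjoint spectra, `rank F = ρ`, `X` solves `AX - XB = F`, and
`r_k(z) = ∏ⱼ (z - αⱼ)/(z - βⱼ)` is a rational function whose poles avoid `λ(A)` and
whose zeros avoid `λ(B)`, then for `kρ < n`,
`σ_{kρ+1}(X) ≤ (sup_{z ∈ λ(A)} |r_k(z)|) (sup_{w ∈ λ(B)} 1/|r_k(w)|) ‖X‖₂`. -/
theorem adi_singular_value_bound {m n : ℕ} (hmn : n ≤ m) (k ρ : ℕ)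
    (A : Matrix (Fin m) (Fin m) ℂ) (B : Matrix (Fin n) (Fin n) ℂ)
    (hA : A * A.conjTranspose = A.conjTranspose * A)
    (hB : B * B.conjTranspose = B.conjTranspose * B)
    (hdisj : spectrum ℂ A ∩ spectrum ℂ B = ∅)
    (F X : Matrix (Fin m) (Fin n) ℂ)
    (hrank : F.rank = ρ)
    (hX : A * X - X * B = F)
    (α β : ℕ → ℂ)
    (hβ : ∀ j < k, β j ∉ spectrum ℂ A)
    (hα : ∀ j < k, α j ∉ spectrum ℂ B)
    (ht : k * ρ < n) :
    singularValue X (k * ρ + 1) ≤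
      (⨆ z ∈ spectrum ℂ A,
          ‖∏ j ∈ Finset.range k, (z - α j) / (z - β j)‖) *
        (⨆ w ∈ spectrum ℂ B,
          ‖∏ j ∈ Finset.range k, (w - α j) / (w - β j)‖⁻¹) *
        specNorm X :=
  adi_singular_value_bound_general k ρ A B hA hB F X hrank hX α β hβ hα
end

section
/- Optimality of the Zolotarev number for two disks: Let E = {z ∈ ℂ : |z − z₀| ≤ η} with z₀, η ∈ ℝ and 0 < η < z₀, let −E = {−z : z ∈ E}, let φ = √(z₀² − η²), and let μ₁ = (z₀ + φ)/(z₀ − φ). For every pair of complex polynomials p, q of degree at most k, there exist points z ∈ E and w ∈ −E such that |p(z)| · |q(w)| ≥ μ₁^{−k} · |q(z)| · |p(w)|. (Equivalently, no rational function of type (k, k) can achieve a ratio sup_E |r| / inf_{−E} |r| smaller than μ₁^{−k}.) -/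
/-!
Put `f(z) = p(z) q(-z)`, a polynomial of degree at most `2k`; the claim is
`μ₁^{-k} |f(-z)| ≤ |f(z)|` for some `z ∈ E`. With `ρ = η / (z₀ + φ)` one has `ρ² = μ₁⁻¹`, and the
Möbius map `u ↦ φ (1 + u) / (1 - u)` sends the circle `|u| = ρ` into `∂E` and intertwines
`u ↦ u⁻¹` with `z ↦ -z`. Clearing denominators turns `w ↦ f(-φ (1 + w) / (1 - w))` into a
polynomial `g` of degree at most `2k`; choosing `u⁻¹` where `|g|` is maximal on `|w| ≤ ρ⁻¹`, the
maximum modulus principle gives `|g(u)| ≤ |g(u⁻¹)|`, which unwinds to `ρ^{2k} |f(-z)| ≤ |f(z)|`.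
-/

open Polynomial ComplexConjugate

noncomputable def cayley (φ u : ℂ) : ℂ := φ * (1 + u) / (1 - u)

lemma cayley_inv (φ : ℂ) {u : ℂ} (hu : u ≠ 0) : cayley φ u⁻¹ = -cayley φ u := by
  unfold cayley
  rcases eq_or_ne u 1 with rfl | hu1
  · simp
  have : (1 : ℂ) - u ≠ 0 := sub_ne_zero.2 hu1.symm
  have : (1 : ℂ) - u⁻¹ ≠ 0 := sub_ne_zero.2 (by simpa [eq_comm] using hu1)
  field_simp
  ring

lemma norm_cayley_sub {φ c η ρ : ℝ} (hη : 0 ≤ η) (hρ : 0 < ρ) (hc₁ : c - φ = η * ρ)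
    (hc₂ : (c + φ) * ρ = η) {u : ℂ} (hu : ‖u‖ = ρ) : ‖cayley φ u - c‖ = η := by
  rcases eq_or_ne u 1 with rfl | hu1
  · -- then `φ = 0`, and `cayley 0 1 = 0` through `x / 0 = 0`
    obtain rfl : ρ = 1 := by simpa using hu.symm
    obtain rfl : c = η := by linarith
    simp [cayley, abs_of_nonneg hη]
  have h1u : (1 : ℂ) - u ≠ 0 := sub_ne_zero.2 hu1.symm
  have hc₁' : (c : ℂ) - φ = η * ρ := by exact_mod_cast hc₁
  have hc₂' : ((c : ℂ) + φ) * ρ = η := by exact_mod_cast hc₂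
  have huu : u * conj u = (ρ : ℂ) ^ 2 := by rw [Complex.mul_conj', hu]
  have key : (ρ : ℂ) * ((cayley φ u - c) * (1 - u)) = η * (u * (1 - conj u)) := by
    rw [cayley, sub_mul, div_mul_cancel₀ _ h1u]
    linear_combination (-(ρ : ℂ)) * hc₁' + u * hc₂' + η * huu
  have hconj : ‖1 - conj u‖ = ‖1 - u‖ := by
    rw [← Complex.norm_conj, map_sub, map_one, Complex.conj_conj]
  have hnorm := congrArg norm key
  rw [norm_mul, norm_mul, norm_mul, norm_mul, hconj, Complex.norm_real, Complex.norm_real, hu,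
    Real.norm_of_nonneg hρ.le, Real.norm_of_nonneg hη] at hnorm
  have hpos : ρ * ‖1 - u‖ ≠ 0 := mul_ne_zero hρ.ne' (norm_ne_zero_iff.2 h1u)
  exact mul_right_cancel₀ hpos (by linear_combination hnorm)

theorem Polynomial.exists_eval_eq_pow_mul_eval_div {K : Type*} [Field K] (f : K[X]) {n : ℕ}
    (hn : f.natDegree ≤ n) (a b c d : K) :
    ∃ g : K[X], ∀ w, c * w + d ≠ 0 →
      g.eval w = (c * w + d) ^ n * f.eval ((a * w + b) / (c * w + d)) := by
  refine ⟨∑ i ∈ Finset.range (n + 1),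
    C (f.coeff i) * (C a * X + C b) ^ i * (C c * X + C d) ^ (n - i), fun w hw => ?_⟩
  rw [eval_eq_sum_range' (Nat.lt_succ_of_le hn), Finset.mul_sum, eval_finsetSum]
  refine Finset.sum_congr rfl fun i hi => ?_
  rw [← pow_sub_mul_pow _ (Nat.le_of_lt_succ (Finset.mem_range.1 hi))]
  simp only [eval_mul, eval_pow, eval_add, eval_C, eval_X]
  have h : (c * w + d) ^ i * ((a * w + b) / (c * w + d)) ^ i = (a * w + b) ^ i := by
    rw [← mul_pow, mul_div_cancel₀ _ hw]
  linear_combination (-(f.coeff i) * (c * w + d) ^ (n - i)) * h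

theorem exists_norm_eq_pow_mul_norm_eval_neg_cayley_le (f : ℂ[X]) {n : ℕ} (hn : f.natDegree ≤ n)
    (φ : ℂ) {ρ : ℝ} (hρ₀ : 0 < ρ) (hρ₁ : ρ < 1) :
    ∃ u : ℂ, ‖u‖ = ρ ∧ ρ ^ n * ‖f.eval (-cayley φ u)‖ ≤ ‖f.eval (cayley φ u)‖ := by
  obtain ⟨g, hg⟩ := f.exists_eval_eq_pow_mul_eval_div hn φ φ 1 (-1)
  have hg_norm : ∀ w : ℂ, w ≠ 1 → ‖g.eval w‖ = ‖1 - w‖ ^ n * ‖f.eval (-cayley φ w)‖ := by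
    intro w hw
    have hden : 1 * w + -1 = -(1 - w) := by ring
    have hw' : 1 * w + -1 ≠ 0 := by rw [hden, neg_ne_zero, sub_ne_zero]; exact hw.symm
    have hpt : (φ * w + φ) / -(1 - w) = -cayley φ w := by rw [cayley, div_neg]; ring
    rw [hg w hw', hden, hpt, norm_mul, norm_pow, norm_neg]
  have hρinv : ρ⁻¹ ≠ 0 := inv_ne_zero hρ₀.ne'
  obtain ⟨v, hv, hmax⟩ := Complex.exists_mem_frontier_isMaxOn_norm
    (U := Metric.ball (0 : ℂ) ρ⁻¹) Metric.isBounded_ball (Metric.nonempty_ball.2 (inv_pos.2 hρ₀))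
    g.differentiable.diffContOnCl
  rw [frontier_ball 0 hρinv, mem_sphere_zero_iff_norm] at hv
  rw [closure_ball 0 hρinv] at hmax
  have hv0 : v ≠ 0 := norm_ne_zero_iff.1 (hv ▸ hρinv)
  set u := v⁻¹ with hu_def
  have hu : ‖u‖ = ρ := by rw [hu_def, norm_inv, hv, inv_inv]
  have hu1 : u ≠ 1 := fun h => hρ₁.ne (by simpa [h] using hu.symm)
  have hv1 : v ≠ 1 := fun h => by simp [h, hu_def] at hu1
  refine ⟨u, hu, ?_⟩
  have hρ_le : ρ ≤ ρ⁻¹ := hρ₁.le.trans ((one_le_inv₀ hρ₀).2 hρ₁.le)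
  have hle : ‖g.eval u‖ ≤ ‖g.eval v‖ := (hmax (mem_closedBall_zero_iff.2 (hu ▸ hρ_le))).out
  have hv_scale : ρ ^ n * ‖1 - v‖ ^ n = ‖1 - u‖ ^ n := by
    rw [← mul_pow, ← hu, ← norm_mul, mul_sub, mul_one, hu_def, inv_mul_cancel₀ hv0, norm_sub_rev]
  have hcayley : -cayley φ v = cayley φ u := by rw [hu_def, cayley_inv φ hv0]
  have hpos : 0 < ‖1 - u‖ ^ n := pow_pos (norm_pos_iff.2 (sub_ne_zero.2 hu1.symm)) n
  refine le_of_mul_le_mul_left ?_ hpos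
  calc ‖1 - u‖ ^ n * (ρ ^ n * ‖f.eval (-cayley φ u)‖) = ρ ^ n * ‖g.eval u‖ := by
        rw [hg_norm u hu1]; ring
    _ ≤ ρ ^ n * ‖g.eval v‖ := by gcongr
    _ = ‖1 - u‖ ^ n * ‖f.eval (cayley φ u)‖ := by
        rw [hg_norm v hv1, hcayley, ← hv_scale]; ring

/-- **Optimality of the Zolotarev number for two disks.**
For the disk `E = {z : |z - z₀| ≤ η}` with `0 < η < z₀`, `φ = √(z₀² - η²)` and
`μ₁ = (z₀ + φ)/(z₀ - φ)`: for every pair of complex polynomials `p, q` of degree at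
most `k` there exist `z ∈ E` and `w ∈ -E` with
`|p(z)|·|q(w)| ≥ μ₁^{-k}·|q(z)|·|p(w)|`. -/
theorem zolotarev_two_disks_optimal (z₀ η : ℝ) (hη : 0 < η) (hz : η < z₀)
    (φ : ℝ) (hφ : φ = Real.sqrt (z₀ ^ 2 - η ^ 2))
    (μ₁ : ℝ) (hμ : μ₁ = (z₀ + φ) / (z₀ - φ)) (k : ℕ)
    (p q : Polynomial ℂ) (hp : p.natDegree ≤ k) (hq : q.natDegree ≤ k) :
    ∃ z w : ℂ, ‖z - (z₀ : ℂ)‖ ≤ η ∧ ‖-w - (z₀ : ℂ)‖ ≤ η ∧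
      (μ₁ ^ k)⁻¹ * (‖q.eval z‖ * ‖p.eval w‖) ≤
        ‖p.eval z‖ * ‖q.eval w‖ := by
  have hφ_sq : φ ^ 2 = z₀ ^ 2 - η ^ 2 := hφ ▸ Real.sq_sqrt (by nlinarith)
  have hφ₀ : 0 ≤ φ := hφ ▸ Real.sqrt_nonneg _
  have hsum : 0 < z₀ + φ := by linarith
  set ρ := η / (z₀ + φ)
  have hρ₀ : 0 < ρ := div_pos hη hsum
  have hρ₁ : ρ < 1 := (div_lt_one hsum).2 (by linarith)
  have hρ_sum : (z₀ + φ) * ρ = η := mul_div_cancel₀ _ hsum.ne'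
  have hρ_diff : z₀ - φ = η * ρ := by
    refine mul_left_cancel₀ hsum.ne' ?_
    linear_combination -hφ_sq - η * hρ_sum
  have hμ_inv : (μ₁ ^ k)⁻¹ = ρ ^ (2 * k) := by
    rw [hμ, hρ_diff, ← hρ_sum, pow_mul, ← inv_pow]
    field_simp
  have hdeg : (p * q.comp (-X)).natDegree ≤ 2 * k := natDegree_mul_le.trans (by
    rw [natDegree_comp, natDegree_neg, natDegree_X, mul_one]; omega)
  obtain ⟨u, hu, hineq⟩ :=
    exists_norm_eq_pow_mul_norm_eval_neg_cayley_le _ hdeg φ hρ₀ hρ₁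
  have hmem := norm_cayley_sub hη.le hρ₀ hρ_diff hρ_sum hu
  refine ⟨cayley φ u, -cayley φ u, hmem.le, by rw [neg_neg]; exact hmem.le, ?_⟩
  simp only [eval_mul, eval_comp, eval_neg, eval_X, neg_neg, norm_mul] at hineq
  rw [hμ_inv, mul_comm ‖q.eval _‖]
  exact hineq
end

section
/- Norm bound for solutions of Sylvester equations with spectra in opposite disks: Let E = {z ∈ ℂ : |z − z₀| ≤ η} with z₀, η ∈ ℝ and 0 < η < z₀, and let −E = {−z : z ∈ E}. Let A ∈ ℂ^{m×m} and B ∈ ℂ^{n×n} be normal matrices with all eigenvalues of A in E and all eigenvalues of B in −E, and suppose X ∈ ℂ^{m×n} satisfies AX − XB = F. Then ‖X‖₂ ≤ ‖F‖₂ / (2(z₀ − η)). -/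
open scoped Matrix.Norms.L2Operator

section IsStarNormal

variable {R A : Type*} [CommSemiring R] [StarRing R] [Ring A] [StarRing A] [Algebra R A]
  [StarModule R A]

instance isStarNormal_algebraMap (c : R) : IsStarNormal (algebraMap R A c) :=
  Algebra.algebraMap_eq_smul_one (A := A) c ▸ IsStarNormal.smul c 1

instance isStarNormal_sub_algebraMap (a : A) [IsStarNormal a] (c : R) :
    IsStarNormal (a - algebraMap R A c) :=
  (algebraMap_star_comm c (A := A) ▸ Algebra.commute_algebraMap_right (star c) a).isStarNormal_sub

end IsStarNormal

theorem IsStarNormal.norm_sub_algebraMap_le {A : Type*} [CStarAlgebra A] (a : A) [IsStarNormal a]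
    {c : ℂ} {r : ℝ} (hr : 0 ≤ r) (h : spectrum ℂ a ⊆ Metric.closedBall c r) :
    ‖a - algebraMap ℂ A c‖ ≤ r := by
  have hrad : spectralRadius ℂ (a - algebraMap ℂ A c) ≤ ENNReal.ofReal r := by
    refine iSup₂_le fun z hz => ?_
    rw [← spectrum.sub_singleton_eq, Set.sub_singleton] at hz
    obtain ⟨w, hw, rfl⟩ := hz
    rw [ENNReal.ofReal, ENNReal.coe_le_coe, ← NNReal.coe_le_coe, coe_nnnorm,
      Real.coe_toNNReal r hr]
    exact mem_closedBall_iff_norm.mp (h hw)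
  rw [IsStarNormal.spectralRadius_eq_nnnorm, ← enorm_eq_nnnorm, ← ofReal_norm] at hrad
  exact (ENNReal.ofReal_le_ofReal_iff hr).mp hrad

namespace Matrix

variable {𝕜 m n : Type*} [RCLike 𝕜] [Fintype m] [DecidableEq m] [Fintype n] [DecidableEq n]

theorem norm_sub_mul_norm_le_of_mul_sub_mul_eq {A : Matrix m m 𝕜} {B : Matrix n n 𝕜}
    {X F : Matrix m n 𝕜} (hX : A * X - X * B = F) {c d : 𝕜} {α β : ℝ}
    (hA : ‖A - algebraMap 𝕜 _ c‖ ≤ α) (hB : ‖B - algebraMap 𝕜 _ d‖ ≤ β) :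
    ‖c - d‖ * ‖X‖ ≤ ‖F‖ + (α + β) * ‖X‖ := by
  set A' := A - algebraMap 𝕜 _ c with hA'
  set B' := B - algebraMap 𝕜 _ d with hB'
  have hshift : (c - d) • X = F - A' * X + X * B' := by
    rw [hA', hB', ← hX, Algebra.algebraMap_eq_smul_one, Algebra.algebraMap_eq_smul_one,
      Matrix.sub_mul, Matrix.mul_sub, Matrix.smul_mul, Matrix.mul_smul, Matrix.one_mul,
      Matrix.mul_one]
    module
  calc ‖c - d‖ * ‖X‖ = ‖F - A' * X + X * B'‖ := by rw [← hshift, norm_smul]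
    _ ≤ ‖F‖ + ‖A'‖ * ‖X‖ + ‖X‖ * ‖B'‖ := by
      grw [norm_add_le, norm_sub_le, l2_opNorm_mul A' X, l2_opNorm_mul X B']
    _ ≤ ‖F‖ + (α + β) * ‖X‖ := by
      grw [hA, hB]
      linarith

end Matrix

/-- **Norm bound for solutions of Sylvester equations with spectra in opposite disks.**
If `A` and `B` are normal with `λ(A) ⊆ E = {z : |z - z₀| ≤ η}` and `λ(B) ⊆ -E`
(`0 < η < z₀`), and `AX - XB = F`, then `‖X‖₂ ≤ ‖F‖₂ / (2(z₀ - η))`. -/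
theorem sylvester_norm_bound_opposite_disks {m n : ℕ} (z₀ η : ℝ)
    (hη : 0 < η) (hz : η < z₀)
    (A : Matrix (Fin m) (Fin m) ℂ) (B : Matrix (Fin n) (Fin n) ℂ)
    (hA : A * A.conjTranspose = A.conjTranspose * A)
    (hB : B * B.conjTranspose = B.conjTranspose * B)
    (hspecA : spectrum ℂ A ⊆ {z : ℂ | ‖z - (z₀ : ℂ)‖ ≤ η})
    (hspecB : spectrum ℂ B ⊆ {z : ℂ | ‖-z - (z₀ : ℂ)‖ ≤ η})
    (F X : Matrix (Fin m) (Fin n) ℂ)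
    (hX : A * X - X * B = F) :
    specNorm X ≤ specNorm F / (2 * (z₀ - η)) := by
  have : IsStarNormal A := ⟨hA.symm⟩
  have : IsStarNormal B := ⟨hB.symm⟩
  have hA' := IsStarNormal.norm_sub_algebraMap_le A (c := z₀) hη.le fun _ hw =>
    mem_closedBall_iff_norm.mpr (hspecA hw)
  have hB' := IsStarNormal.norm_sub_algebraMap_le B (c := -z₀) hη.le fun _ hw => by
    rw [mem_closedBall_iff_norm', neg_sub_comm]
    exact hspecB hw
  have h2z₀ : ‖(z₀ : ℂ) - -z₀‖ = 2 * z₀ := by simp [← two_mul, (hη.trans hz).le]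
  have hbound := Matrix.norm_sub_mul_norm_le_of_mul_sub_mul_eq hX hA' hB'
  rw [h2z₀] at hbound
  change ‖X‖ ≤ ‖F‖ / _
  rw [le_div_iff₀ (by linarith)]
  linarith
end

section
/- Closed-form Hadamard-product solution of the Sylvester equation: Let A ∈ ℂ^{m×m} and B ∈ ℂ^{n×n} be normal matrices with disjoint spectra, with unitary eigendecompositions A = Y Λ_A Y^* and B = W Λ_B W^* (Λ_A, Λ_B diagonal, Y, W unitary). Let C ∈ ℂ^{m×n} be the Cauchy matrix with entries C_{jk} = 1 / ((Λ_A)_{jj} − (Λ_B)_{kk}). Then the unique solution X of AX − XB = F is X = Y ( C ∘ (Y^* F W) ) W^*, where '∘' denotes the Hadamard (entrywise) matrix product. -/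
/-! Conjugating the equation by the unitaries turns it into the diagonal Sylvester equation
`Λ_A G - G Λ_B = Yᴴ F W` for `G = Yᴴ X W`, which decouples entrywise into
`((Λ_A)ⱼ - (Λ_B)ₖ) G_{jk} = (Yᴴ F W)_{jk}`; disjointness of the spectra lets us divide. -/

namespace Matrix

variable {l m n r s α : Type*} [Fintype l] [Fintype m] [Fintype n] [Fintype r] [Fintype s]

theorem mul_sub_mul_conj_of_left_inverse [Ring α] [DecidableEq r] [DecidableEq s]
    {Y : Matrix m r α} {Y' : Matrix r m α} {W : Matrix n s α} {W' : Matrix s n α}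
    (hY : Y' * Y = 1) (hW : W' * W = 1) (D : Matrix r r α) (E : Matrix s s α) (X : Matrix m n α) :
    Y' * (Y * D * Y' * X - X * (W * E * W')) * W = D * (Y' * X * W) - Y' * X * W * E := by
  calc Y' * (Y * D * Y' * X - X * (W * E * W')) * W
      = (Y' * Y) * D * (Y' * X * W) - (Y' * X * W) * E * (W' * W) := by
        simp only [Matrix.mul_sub, Matrix.sub_mul, Matrix.mul_assoc]
    _ = D * (Y' * X * W) - Y' * X * W * E := by
        rw [hY, hW, Matrix.one_mul, Matrix.mul_one]

theorem hadamard_diagonal_mul_sub_mul_diagonal [Field α] [DecidableEq m] [DecidableEq n]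
    {a : m → α} {b : n → α} (hab : ∀ j k, a j ≠ b k) {C : Matrix m n α}
    (hC : ∀ j k, C j k = (a j - b k)⁻¹) (G : Matrix m n α) :
    C ⊙ (diagonal a * G - G * diagonal b) = G := by
  ext j k
  have hjk : a j - b k ≠ 0 := sub_ne_zero.mpr (hab j k)
  rw [hadamard_apply, sub_apply, diagonal_mul, mul_diagonal, hC, mul_comm (G j k), ← sub_mul,
    inv_mul_cancel_left₀ hjk]

theorem eq_mul_mul_of_right_inverse [Semiring α] [DecidableEq l] [DecidableEq n]
    {Y : Matrix l m α} {Y' : Matrix m l α} {W : Matrix n r α} {W' : Matrix r n α}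
    (hY : Y * Y' = 1) (hW : W * W' = 1)
    (X : Matrix l n α) : X = Y * (Y' * X * W) * W' := by
  rw [← Matrix.mul_assoc, ← Matrix.mul_assoc, hY, Matrix.one_mul, Matrix.mul_assoc, hW,
    Matrix.mul_one]

end Matrix

/-- **Closed-form Hadamard-product solution of the Sylvester equation.**
If `A = Y Λ_A Yᴴ` and `B = W Λ_B Wᴴ` are unitary eigendecompositions of normal matrices
with disjoint spectra, and `C` is the Cauchy matrix `C_{jk} = 1/((Λ_A)ⱼ - (Λ_B)ₖ)`, then
the unique solution of `AX - XB = F` is `X = Y (C ∘ (Yᴴ F W)) Wᴴ`, where `∘` is the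
Hadamard product. -/
theorem sylvester_hadamard_closed_form {m n : ℕ}
    (A : Matrix (Fin m) (Fin m) ℂ) (B : Matrix (Fin n) (Fin n) ℂ)
    (Y : Matrix (Fin m) (Fin m) ℂ) (W : Matrix (Fin n) (Fin n) ℂ)
    (hY : Y ∈ Matrix.unitaryGroup (Fin m) ℂ)
    (hW : W ∈ Matrix.unitaryGroup (Fin n) ℂ)
    (ΛA : Fin m → ℂ) (ΛB : Fin n → ℂ)
    (hAeig : A = Y * Matrix.diagonal ΛA * Y.conjTranspose)
    (hBeig : B = W * Matrix.diagonal ΛB * W.conjTranspose)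
    (hdisj : ∀ (j : Fin m) (k : Fin n), ΛA j ≠ ΛB k)
    (C : Matrix (Fin m) (Fin n) ℂ) (hC : ∀ j k, C j k = (ΛA j - ΛB k)⁻¹)
    (F X : Matrix (Fin m) (Fin n) ℂ) (hX : A * X - X * B = F) :
    X = Y * Matrix.hadamard C (Y.conjTranspose * F * W) * W.conjTranspose := by
  have hF : Y.conjTranspose * F * W = Matrix.diagonal ΛA * (Y.conjTranspose * X * W)
      - Y.conjTranspose * X * W * Matrix.diagonal ΛB := by
    rw [← hX, hAeig, hBeig]
    exact Matrix.mul_sub_mul_conj_of_left_inverse (Unitary.star_mul_self_of_mem hY)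
      (Unitary.star_mul_self_of_mem hW) _ _ X
  rw [hF, Matrix.hadamard_diagonal_mul_sub_mul_diagonal hdisj hC]
  exact Matrix.eq_mul_mul_of_right_inverse (Unitary.mul_star_self_of_mem hY)
    (Unitary.mul_star_self_of_mem hW) X
end
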